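/- arXiv:1907.06401 — 2 statements merged into one kernel-verified Lean document; each statement's English description precedes it below -/
import Mathlib

section
/- Let W_C = C W Cᵀ be invertible, where C ∈ ℝ^{r×n} and W is the controllability Gramian. Then the input u*(τ) = Bᵀ (Aᵀ)^{τ_f-τ-1} Cᵀ (C W Cᵀ)^{-1} (y_f − C A^{τ_f} x₀) drives the system x(τ+1) = A x(τ) + B u(τ) from x(0)=x₀ to an x(τ_f) with C x(τ_f) = y_f. -/
open Matrix Finset

private lemma mulVec_sum' {α n m ι : Type*} [NonUnitalNonAssocSemiring α] [Fintype m]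
    (s : Finset ι) (M : Matrix n m α) (f : ι → m → α) :
    M.mulVec (∑ i ∈ s, f i) = ∑ i ∈ s, M.mulVec (f i) := by
  ext j
  simp [Matrix.mulVec, dotProduct, Finset.sum_apply, Finset.mul_sum]
  rw [Finset.sum_comm]

private lemma sum_mulVec' {α n m ι : Type*} [NonUnitalNonAssocSemiring α] [Fintype m]
    (s : Finset ι) (M : ι → Matrix n m α) (v : m → α) :
    ∑ i ∈ s, (M i).mulVec v = (∑ i ∈ s, M i).mulVec v := by
  ext j
  simp [Matrix.mulVec, dotProduct, Finset.sum_apply, Matrix.sum_apply,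
    Finset.sum_mul]
  rw [Finset.sum_comm]

theorem target_control_input_drives_output (n m r : ℕ)
    (A : Matrix (Fin n) (Fin n) ℝ) (B : Matrix (Fin n) (Fin m) ℝ)
    (C : Matrix (Fin r) (Fin n) ℝ)
    (x₀ : Fin n → ℝ) (yf : Fin r → ℝ) (τf : ℕ) (hτf : 1 ≤ τf)
    (W : Matrix (Fin n) (Fin n) ℝ)
    (hW : W = ∑ i ∈ Finset.range τf,
      A ^ (τf - i - 1) * B * Bᵀ * (Aᵀ) ^ (τf - i - 1))
    (hWC : IsUnit (C * W * Cᵀ))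
    (u : ℕ → Fin m → ℝ)
    (hu : ∀ τ : ℕ, u τ = (Bᵀ * (Aᵀ) ^ (τf - τ - 1) * Cᵀ * (C * W * Cᵀ)⁻¹).mulVec
      (yf - (C * A ^ τf).mulVec x₀))
    (x : ℕ → Fin n → ℝ) (hx0 : x 0 = x₀)
    (hrec : ∀ τ : ℕ, x (τ + 1) = A.mulVec (x τ) + B.mulVec (u τ)) :
    C.mulVec (x τf) = yf := by
  have hxt : ∀ t : ℕ, x t = (A ^ t).mulVec x₀ +
      ∑ i ∈ Finset.range t, ((A ^ (t - i - 1)) * B).mulVec (u i) := by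
    intro t
    induction t with
    | zero => simp [hx0]
    | succ t ih =>
      rw [hrec t, ih, Matrix.mulVec_add, Matrix.mulVec_mulVec, ← pow_succ',
        Finset.sum_range_succ]
      have h1 : A.mulVec (∑ i ∈ Finset.range t, ((A ^ (t - i - 1)) * B).mulVec (u i))
          = ∑ i ∈ Finset.range t, ((A ^ (t + 1 - i - 1)) * B).mulVec (u i) := by
        rw [mulVec_sum']
        refine Finset.sum_congr rfl fun i hi => ?_
        have hi' : t - i - 1 + 1 = t + 1 - i - 1 := by
          have := Finset.mem_range.mp hi; omega
        rw [Matrix.mulVec_mulVec, ← Matrix.mul_assoc, ← pow_succ', hi']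
      rw [h1]
      have h2 : t + 1 - t - 1 = 0 := by omega
      rw [h2, pow_zero, Matrix.one_mul]
      abel
  rw [hxt τf, Matrix.mulVec_add, Matrix.mulVec_mulVec, mulVec_sum']
  have h3 : ∀ i ∈ Finset.range τf,
      C.mulVec (((A ^ (τf - i - 1)) * B).mulVec (u i)) =
        ((C * (A ^ (τf - i - 1) * B * Bᵀ * (Aᵀ) ^ (τf - i - 1)) * Cᵀ) *
          (C * W * Cᵀ)⁻¹).mulVec (yf - (C * A ^ τf).mulVec x₀) := by
    intro i hi
    rw [hu i, Matrix.mulVec_mulVec, Matrix.mulVec_mulVec]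
    congr 1
    simp only [Matrix.mul_assoc]
  have h5 : ∑ i ∈ Finset.range τf,
      C * (A ^ (τf - i - 1) * B * Bᵀ * (Aᵀ) ^ (τf - i - 1)) * Cᵀ = C * W * Cᵀ := by
    rw [hW, Matrix.mul_sum, Matrix.sum_mul]
  rw [Finset.sum_congr rfl h3, sum_mulVec', ← Finset.sum_mul, h5]
  have h4 : C * W * Cᵀ * (C * W * Cᵀ)⁻¹ = 1 :=
    Matrix.mul_nonsing_inv _ (Matrix.isUnit_iff_isUnit_det _ |>.mp hWC)
  rw [h4, Matrix.one_mulVec]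
  simp
end

section
/- For any symmetric positive definite matrix M ∈ ℝ^{n×n} with n ≥ 2, the largest eigenvalue satisfies λ_max(M)² ≤ trace(M²)/n + √((n−1)/n · (trace(M⁴) − trace(M²)²/n)). -/
open Matrix Finset

/-!
Since `trace (M ^ k) = ∑ λᵢ ^ k`, the bound is Samuelson's inequality for the numbers `xᵢ = λᵢ ^ 2`
with sum `S` and sum of squares `Q`: every `xⱼ` exceeds the mean `S / n` by at most
`√((n - 1) / n * (Q - S ^ 2 / n))`. This is Cauchy–Schwarz for the other `n - 1` numbers,
`(S - xⱼ) ^ 2 ≤ (n - 1) * (Q - xⱼ ^ 2)`, which rearranges to `(n xⱼ - S) ^ 2 ≤ (n - 1) * (n Q - S ^ 2)`.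
-/

theorem Matrix.IsHermitian.trace_pow_eq_sum_eigenvalues_pow {𝕜 n : Type*} [RCLike 𝕜] [Fintype n]
    [DecidableEq n] {A : Matrix n n 𝕜} (hA : A.IsHermitian) (k : ℕ) :
    (A ^ k).trace = ∑ i, (hA.eigenvalues i : 𝕜) ^ k := by
  conv_lhs => rw [hA.spectral_theorem, ← map_pow, Unitary.conjStarAlgAut_apply, trace_mul_cycle,
    Unitary.coe_star_mul_self, one_mul, diagonal_pow, trace_diagonal]
  simp

theorem sq_card_mul_sub_sum_le {ι : Type*} [Fintype ι] (x : ι → ℝ) (j : ι) :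
    (Fintype.card ι * x j - ∑ i, x i) ^ 2 ≤
      (Fintype.card ι - 1) * (Fintype.card ι * ∑ i, x i ^ 2 - (∑ i, x i) ^ 2) := by
  classical
  have hcs := sq_sum_le_card_mul_sum_sq (s := univ.erase j) (f := x)
  rw [sum_erase_eq_sub (mem_univ j), sum_erase_eq_sub (mem_univ j),
    card_erase_of_mem (mem_univ j), card_univ, Nat.cast_pred (Fintype.card_pos_iff.2 ⟨j⟩)] at hcs
  nlinarith [mul_le_mul_of_nonneg_left hcs (Nat.cast_nonneg (Fintype.card ι) : (0 : ℝ) ≤ _)]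

/-- Samuelson's inequality. -/
theorem le_mean_add_sqrt {ι : Type*} [Fintype ι] (x : ι → ℝ) (j : ι) :
    x j ≤ (∑ i, x i) / Fintype.card ι + √((Fintype.card ι - 1) / Fintype.card ι *
      (∑ i, x i ^ 2 - (∑ i, x i) ^ 2 / Fintype.card ι)) := by
  have hsq_scaled := sq_card_mul_sub_sum_le x j
  set N : ℝ := (Fintype.card ι : ℝ)
  have hN : 0 < N := Nat.cast_pos.2 (Fintype.card_pos_iff.2 ⟨j⟩)
  have hsq : (x j - (∑ i, x i) / N) ^ 2 ≤
      (N - 1) / N * (∑ i, x i ^ 2 - (∑ i, x i) ^ 2 / N) := by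
    calc (x j - (∑ i, x i) / N) ^ 2 = (N * x j - ∑ i, x i) ^ 2 / N ^ 2 := by field_simp
      _ ≤ (N - 1) * (N * ∑ i, x i ^ 2 - (∑ i, x i) ^ 2) / N ^ 2 := by gcongr
      _ = _ := by field_simp
  linarith [le_abs_self (x j - (∑ i, x i) / N), Real.abs_le_sqrt hsq]

theorem lam_max_sq_trace_bound (n : ℕ) (hn : 2 ≤ n)
    (M : Matrix (Fin n) (Fin n) ℝ) (hM : M.PosDef) :
    (⨆ i, hM.1.eigenvalues i) ^ 2 ≤
      (M ^ 2).trace / n +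
        Real.sqrt (((n : ℝ) - 1) / n * ((M ^ 4).trace - (M ^ 2).trace ^ 2 / n)) := by
  have : Nonempty (Fin n) := ⟨⟨0, by omega⟩⟩
  obtain ⟨j, hj⟩ := exists_eq_ciSup_of_finite (f := hM.1.eigenvalues)
  have htrace (k : ℕ) : (M ^ k).trace = ∑ i, hM.1.eigenvalues i ^ k := by
    simpa using hM.1.trace_pow_eq_sum_eigenvalues_pow k
  have hpow (i) : hM.1.eigenvalues i ^ 4 = (hM.1.eigenvalues i ^ 2) ^ 2 := by ring
  rw [← hj, htrace, htrace, Fintype.sum_congr _ _ hpow]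
  simpa using le_mean_add_sqrt (fun i => hM.1.eigenvalues i ^ 2) j
end
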